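/- Unnormalized (energy-based) Barber–Agakov bound: let (Ω, μ) be a probability space and let Y : Ω → S, B : Ω → T, O : Ω → U be measurable random variables taking values in finite types equipped with the discrete σ-algebra. Let 𝓔 : T → U → S → ℝ be any critic function, and for (t,u) with P(B=t) > 0 define the partition function Z(t,u) = Σ_{s∈S} P(Y=s | B=t) · exp(𝓔 t u s). Then I(O ; Y | B) ≥ Σ_{(t,u,s)} P(B=t, O=u, Y=s) · 𝓔 t u s − Σ_{(t,u): P(B=t,O=u)>0} P(B=t, O=u) · log Z(t,u). -/

import Mathlib

open MeasureTheory ProbabilityTheory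

/-- Shannon entropy (natural log) of a random variable `X` with values in a finite type,
with the convention `0 * log 0 = 0` (since `Real.log 0 = 0`). -/
noncomputable def entropy {Ω S : Type*} [MeasurableSpace Ω] [Fintype S]
    (μ : Measure Ω) (X : Ω → S) : ℝ :=
  -∑ s : S, (μ (X ⁻¹' {s})).toReal * Real.log (μ (X ⁻¹' {s})).toReal

/-- Conditional entropy `H(Y | B) = Σ_b P(B=b) * H(Y ; μ(·|B=b))`. -/
noncomputable def condEntropy {Ω S T : Type*} [MeasurableSpace Ω] [Fintype S] [Fintype T]
    (μ : Measure Ω) (Y : Ω → S) (B : Ω → T) : ℝ :=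
  ∑ t : T, (μ (B ⁻¹' {t})).toReal * entropy (ProbabilityTheory.cond μ (B ⁻¹' {t})) Y

/-- Mutual information `I(X;Y) = H(X) + H(Y) - H(⟨X,Y⟩)`. -/
noncomputable def mutualInfo {Ω T S : Type*} [MeasurableSpace Ω] [Fintype T] [Fintype S]
    (μ : Measure Ω) (X : Ω → T) (Y : Ω → S) : ℝ :=
  entropy μ X + entropy μ Y - entropy μ (fun ω => (X ω, Y ω))

/-- Conditional mutual information `I(O;Y|B) = Σ_b P(B=b) * I(O;Y ; μ(·|B=b))`. -/
noncomputable def condMutualInfo {Ω U S T : Type*} [MeasurableSpace Ω]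
    [Fintype U] [Fintype S] [Fintype T]
    (μ : Measure Ω) (O : Ω → U) (Y : Ω → S) (B : Ω → T) : ℝ :=
  ∑ t : T, (μ (B ⁻¹' {t})).toReal * mutualInfo (ProbabilityTheory.cond μ (B ⁻¹' {t})) O Y

/-!
Fix `B = t` and `O = u`. Tilting `P(Y = · | B = t)` by `exp (𝓔 t u ·)` and rescaling to the mass
`P(B = t, O = u)` gives a measure `q` with `Z(t,u)` as normalizer; Gibbs' inequality
`Σ p log (p / q) ≥ Σ (p - q) = 0` against the joint weights `p = P(B = t, O = u, Y = ·)` is exactly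
the inequality between the `(t,u)`-terms of the two sides, once `Σ_u Σ_s p log (p / (p_O p_Y))` is
recognised as the mutual information. Terms with `P(B = t, O = u) = 0` vanish, so restricting
the sum to them is harmless.
-/

open Real Finset

theorem Real.sub_le_mul_log_div {p q : ℝ} (hp : 0 ≤ p) (hq : 0 < q) :
    p - q ≤ p * log (p / q) := by
  have h := mul_le_mul_of_nonneg_left (self_sub_one_le_mul_log (div_nonneg hp hq.le)) hq.le
  rwa [mul_sub, mul_one, ← mul_assoc, mul_div_cancel₀ _ hq.ne'] at h

theorem sum_mul_sub_mul_log_sum_mul_exp_le {ι : Type*} [Fintype ι] {a b : ι → ℝ}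
    (ha : ∀ i, 0 ≤ a i) (hb : ∀ i, 0 ≤ b i) (hab : ∀ i, b i = 0 → a i = 0) (f : ι → ℝ) :
    ∑ i, a i * f i - (∑ i, a i) * log (∑ i, b i * exp (f i)) ≤
      ∑ i, a i * log (a i / ((∑ j, a j) * b i)) := by
  set A := ∑ i, a i
  set Z := ∑ i, b i * exp (f i)
  rcases (sum_nonneg fun i _ => ha i : 0 ≤ A).eq_or_lt with hA | hA
  · have h0 : ∀ i, a i = 0 := fun i =>
      (sum_eq_zero_iff_of_nonneg fun i _ => ha i).1 hA.symm i (mem_univ i)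
    simp [h0, show A = 0 from hA.symm]
  have hbpos : ∀ i, a i ≠ 0 → 0 < b i := fun i hai =>
    (hb i).lt_of_ne fun h => hai (hab i h.symm)
  obtain ⟨i₀, -, hi₀⟩ := exists_lt_of_sum_lt (by simpa using hA : ∑ i, (0 : ℝ) < ∑ i, a i)
  have hZ : 0 < Z := sum_pos' (fun i _ => mul_nonneg (hb i) (exp_pos _).le)
    ⟨i₀, mem_univ _, mul_pos (hbpos i₀ hi₀.ne') (exp_pos _)⟩
  -- Gibbs' inequality against the tilt `q` of `b`, rescaled to the total mass `A` of `a`.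
  set q : ι → ℝ := fun i => A * b i * exp (f i) / Z
  have hq_sum : ∑ i, q i = A := by
    simp only [q, ← sum_div, mul_assoc, ← mul_sum]
    exact mul_div_cancel_right₀ A hZ.ne'
  have hterm : ∀ i, a i - q i ≤ a i * log (a i / (A * b i)) - a i * f i + a i * log Z := by
    intro i
    rcases (ha i).eq_or_lt with hai | hai
    · rw [← hai]
      simpa using div_nonneg (mul_nonneg (mul_nonneg hA.le (hb i)) (exp_pos _).le) hZ.le
    have hbi := hbpos i hai.ne'
    have hsplit : a i / q i = a i / (A * b i) * Z / exp (f i) := by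
      simp only [q]; field_simp
    have hlog : log (a i / q i) = log (a i / (A * b i)) - f i + log Z := by
      rw [hsplit, log_div (by positivity) (exp_pos _).ne', log_mul (by positivity) hZ.ne',
        log_exp]
      ring
    have := sub_le_mul_log_div hai.le (show 0 < q i by positivity)
    rw [hlog] at this
    linarith
  have hsum := sum_le_sum fun i (_ : i ∈ univ) => hterm i
  simp only [sum_sub_distrib, sum_add_distrib, hq_sum, ← sum_mul] at hsum
  linarith

section Conditioning

variable {Ω : Type*} [MeasurableSpace Ω] {μ : Measure Ω} {s : Set Ω}

theorem toReal_cond_apply (hs : MeasurableSet s) (A : Set Ω) :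
    (μ[A|s]).toReal = (μ (s ∩ A)).toReal / (μ s).toReal := by
  rw [cond_apply hs, ENNReal.toReal_mul, ENNReal.toReal_inv, inv_mul_eq_div]

theorem toReal_measure_inter_eq_mul_toReal_cond [IsFiniteMeasure μ] (hs : MeasurableSet s)
    (A : Set Ω) : (μ (s ∩ A)).toReal = (μ s).toReal * (μ[A|s]).toReal := by
  rw [← cond_mul_eq_inter hs A μ, ENNReal.toReal_mul, mul_comm]

end Conditioning

section FiniteValued

variable {Ω S U : Type*} [MeasurableSpace Ω] [Fintype S] [MeasurableSpace S]
  [DiscreteMeasurableSpace S] [Fintype U] [MeasurableSpace U] [DiscreteMeasurableSpace U]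
  {μ : Measure Ω} [IsFiniteMeasure μ]

theorem sum_toReal_measure_inter_preimage_singleton {Y : Ω → S} (hY : Measurable Y)
    (A : Set Ω) : ∑ s, (μ (A ∩ Y ⁻¹' {s})).toReal = (μ A).toReal := by
  have h := sum_measureReal_preimage_singleton (μ := μ.restrict A) univ
    fun s _ => hY (measurableSet_singleton s)
  simpa [measureReal_def, Measure.restrict_apply (hY (measurableSet_singleton _)),
    Set.inter_comm] using h

theorem mutualInfo_eq_sum_mul_log_div {O : Ω → U} {Y : Ω → S} (hO : Measurable O)
    (hY : Measurable Y) :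
    mutualInfo μ O Y = ∑ u, ∑ s, (μ (O ⁻¹' {u} ∩ Y ⁻¹' {s})).toReal *
      log ((μ (O ⁻¹' {u} ∩ Y ⁻¹' {s})).toReal /
        ((μ (O ⁻¹' {u})).toReal * (μ (Y ⁻¹' {s})).toReal)) := by
  set p : U → S → ℝ := fun u s => (μ (O ⁻¹' {u} ∩ Y ⁻¹' {s})).toReal
  have hmargU (u : U) : ∑ s, p u s = (μ (O ⁻¹' {u})).toReal :=
    sum_toReal_measure_inter_preimage_singleton hY _
  have hmargS (s : S) : ∑ u, p u s = (μ (Y ⁻¹' {s})).toReal := by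
    simpa only [p, Set.inter_comm] using sum_toReal_measure_inter_preimage_singleton hO _
  have hlog (u : U) (s : S) : p u s * log (p u s / ((μ (O ⁻¹' {u})).toReal *
      (μ (Y ⁻¹' {s})).toReal)) = p u s * log (p u s) - p u s * log (μ (O ⁻¹' {u})).toReal -
        p u s * log (μ (Y ⁻¹' {s})).toReal := by
    rcases eq_or_ne (p u s) 0 with h | h
    · simp [h]
    have hpos : 0 < p u s := ENNReal.toReal_nonneg.lt_of_ne' h
    have hU : p u s ≤ (μ (O ⁻¹' {u})).toReal := hmargU u ▸
      single_le_sum (f := p u) (fun s _ => ENNReal.toReal_nonneg) (mem_univ s)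
    have hS : p u s ≤ (μ (Y ⁻¹' {s})).toReal := hmargS s ▸
      single_le_sum (f := fun u => p u s) (fun u _ => ENNReal.toReal_nonneg) (mem_univ u)
    rw [log_div h (mul_pos (hpos.trans_le hU) (hpos.trans_le hS)).ne',
      log_mul (hpos.trans_le hU).ne' (hpos.trans_le hS).ne']
    ring
  have hpair (u : U) (s : S) : (fun ω => (O ω, Y ω)) ⁻¹' {(u, s)} = O ⁻¹' {u} ∩ Y ⁻¹' {s} := by
    ext; simp
  show _ = ∑ u, ∑ s, p u s * log (p u s / _)
  simp only [hlog, sum_sub_distrib]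
  rw [sum_comm (f := fun u s => p u s * log (μ (Y ⁻¹' {s})).toReal)]
  simp only [← sum_mul, hmargU, hmargS]
  simp only [mutualInfo, entropy, Fintype.sum_prod_type, hpair, p]
  ring

theorem sum_mul_sub_mul_log_partition_le_mutualInfo {O : Ω → U} {Y : Ω → S}
    (hO : Measurable O) (hY : Measurable Y) (E : U → S → ℝ) :
    ∑ u, ∑ y, (μ (O ⁻¹' {u} ∩ Y ⁻¹' {y})).toReal * E u y -
        ∑ u, (μ (O ⁻¹' {u})).toReal * log (∑ y, (μ (Y ⁻¹' {y})).toReal * exp (E u y)) ≤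
      mutualInfo μ O Y := by
  rw [mutualInfo_eq_sum_mul_log_div hO hY, ← sum_sub_distrib]
  refine sum_le_sum fun u _ => ?_
  have hac (y : S) (hy : (μ (Y ⁻¹' {y})).toReal = 0) : (μ (O ⁻¹' {u} ∩ Y ⁻¹' {y})).toReal = 0 :=
    le_antisymm (hy ▸ ENNReal.toReal_mono (measure_ne_top _ _)
      (measure_mono Set.inter_subset_right)) ENNReal.toReal_nonneg
  simpa only [sum_toReal_measure_inter_preimage_singleton hY] using
    sum_mul_sub_mul_log_sum_mul_exp_le (fun _ => ENNReal.toReal_nonneg)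
      (fun _ => ENNReal.toReal_nonneg) hac (E u)

theorem sum_mul_sub_mul_log_partition_le_mul_mutualInfo_cond {O : Ω → U} {Y : Ω → S}
    {s : Set Ω} (hs : MeasurableSet s) (hO : Measurable O) (hY : Measurable Y)
    (E : U → S → ℝ) :
    ∑ u, ∑ y, (μ (s ∩ O ⁻¹' {u} ∩ Y ⁻¹' {y})).toReal * E u y -
        ∑ u, (μ (s ∩ O ⁻¹' {u})).toReal *
          log (∑ y, (μ (s ∩ Y ⁻¹' {y})).toReal / (μ s).toReal * exp (E u y)) ≤
      (μ s).toReal * mutualInfo μ[|s] O Y := by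
  simp_rw [← toReal_cond_apply hs, Set.inter_assoc, toReal_measure_inter_eq_mul_toReal_cond hs,
    mul_assoc, ← mul_sum, ← mul_sub]
  exact mul_le_mul_of_nonneg_left (sum_mul_sub_mul_log_partition_le_mutualInfo hO hY E)
    ENNReal.toReal_nonneg

end FiniteValued

open scoped Classical in
/-- unnormalized (energy-based) Barber–Agakov bound with critic `𝓔` and
partition function `Z(t,u) = Σ_s P(Y=s | B=t) · exp(𝓔 t u s)`. -/
theorem unnormalized_barber_agakov_lower_bound
    {Ω S T U : Type*} [MeasurableSpace Ω]
    [Fintype S] [MeasurableSpace S] [DiscreteMeasurableSpace S]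
    [Fintype T] [MeasurableSpace T] [DiscreteMeasurableSpace T]
    [Fintype U] [MeasurableSpace U] [DiscreteMeasurableSpace U]
    (μ : Measure Ω) [IsProbabilityMeasure μ]
    (Y : Ω → S) (B : Ω → T) (O : Ω → U)
    (hY : Measurable Y) (hB : Measurable B) (hO : Measurable O)
    (𝓔 : T → U → S → ℝ) :
    condMutualInfo μ O Y B ≥
      (∑ x : T × U × S,
        (μ (B ⁻¹' {x.1} ∩ O ⁻¹' {x.2.1} ∩ Y ⁻¹' {x.2.2})).toReal *
          𝓔 x.1 x.2.1 x.2.2) -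
      ∑ tu ∈ Finset.univ.filter
          (fun tu : T × U => 0 < (μ (B ⁻¹' {tu.1} ∩ O ⁻¹' {tu.2})).toReal),
        (μ (B ⁻¹' {tu.1} ∩ O ⁻¹' {tu.2})).toReal *
          Real.log (∑ s : S,
            ((μ (B ⁻¹' {tu.1} ∩ Y ⁻¹' {s})).toReal / (μ (B ⁻¹' {tu.1})).toReal) *
              Real.exp (𝓔 tu.1 tu.2 s)) := by
  rw [ge_iff_le,
    sum_filter_of_ne fun _ _ h => ENNReal.toReal_nonneg.lt_of_ne' (left_ne_zero_of_mul h)]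
  simp only [Fintype.sum_prod_type, condMutualInfo]
  rw [← sum_sub_distrib]
  exact sum_le_sum fun t _ =>
    sum_mul_sub_mul_log_partition_le_mul_mutualInfo_cond (hB (measurableSet_singleton t)) hO hY
      (𝓔 t)
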